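/- arXiv:1801.00684 — 2 statements merged into one kernel-verified Lean document; each statement's English description precedes it below -/
import Mathlib

section
/- For an equiprobable discrete distribution with sorted outcomes ψ^{i_1} ≤ … ≤ ψ^{i_{n_d}} each of probability p = 1/n_d, CVaR_α(ψ) = -(1/α)(Σ_{k=1}^{j} p ψ^{i_k} + (α - jp) ψ^{i_{j+1}}) for α ∈ [jp, (j+1)p) with 1 ≤ j ≤ n_d - 1, CVaR_α(ψ) = -ψ^{i_1} for α ∈ (0, p), and CVaR_1(ψ) = -Σ_k p ψ^{i_k}. -/
open Finset MeasureTheory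

/-!
`VaR_s(ψ)` is a right-continuous step function equal to `-ψ k` on `[k/n, (k+1)/n)`, so
`∫₀^α VaR` is `-1/n` times the sum of the outcomes on the steps below `α`, plus the
contribution of the partial step containing `α`.
-/

/-- The value-at-risk `VaR_s(ψ)` of an equiprobable discrete distribution with
sorted outcomes `ψ 0 ≤ … ≤ ψ (n-1)`: `VaR_s(ψ) = -ψ j` for
`s ∈ [j/n, (j+1)/n)` and `VaR_1(ψ) = -ψ (n-1)`. -/
noncomputable def VaRd (n : ℕ) [NeZero n] (ψ : Fin n → ℝ) (s : ℝ) : ℝ :=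
  -ψ ⟨min ⌊s * (n : ℝ)⌋₊ (n - 1),
      lt_of_le_of_lt (min_le_right _ _)
        (Nat.sub_lt (Nat.pos_of_ne_zero (NeZero.ne n)) one_pos)⟩

/-- The conditional value-at-risk `CVaR_α(ψ) = (1/α) ∫₀^α VaR_s(ψ) ds` of an
equiprobable discrete distribution with sorted outcomes. -/
noncomputable def CVaRd (n : ℕ) [NeZero n] (ψ : Fin n → ℝ) (α : ℝ) : ℝ :=
  (1 / α) * ∫ s in (0:ℝ)..α, VaRd n ψ s

theorem intervalIntegral_eq_of_eqOn_Ico {E : Type*} [NormedAddCommGroup E] [NormedSpace ℝ E]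
    [CompleteSpace E] {f : ℝ → E} {a b : ℝ} {c : E} (hab : a ≤ b)
    (hf : Set.EqOn f (fun _ => c) (Set.Ico a b)) :
    ∫ x in a..b, f x = (b - a) • c := by
  rw [intervalIntegral.integral_of_le hab, ← integral_Ico_eq_integral_Ioc,
    setIntegral_congr_fun measurableSet_Ico hf, setIntegral_const, Real.volume_real_Ico_of_le hab]

section VaRd

variable {n : ℕ} [NeZero n] (ψ : Fin n → ℝ)

theorem measurable_VaRd : Measurable (VaRd n ψ) := by
  have hfloor : Measurable fun s : ℝ => ⌊s * n⌋₊ :=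
    Nat.measurable_floor.comp (measurable_id.mul_const _)
  exact (measurable_from_nat (f := fun m : ℕ => -ψ ⟨min m (n - 1),
    (min_le_right _ _).trans_lt (Nat.sub_lt (NeZero.pos n) one_pos)⟩)).comp hfloor

theorem abs_VaRd_le (s : ℝ) : |VaRd n ψ s| ≤ ∑ k, |ψ k| := by
  rw [VaRd, abs_neg]
  exact single_le_sum (fun k _ => abs_nonneg (ψ k)) (mem_univ _)

theorem intervalIntegrable_VaRd (a b : ℝ) : IntervalIntegrable (VaRd n ψ) volume a b :=
  (intervalIntegrable_iff).2 <| Measure.integrableOn_of_bounded measure_Ioc_lt_top.ne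
    (measurable_VaRd ψ).aestronglyMeasurable (Filter.Eventually.of_forall (abs_VaRd_le ψ))

theorem VaRd_eq_of_mem_Ico {k : ℕ} (hk : k < n) {s : ℝ}
    (hs : s ∈ Set.Ico ((k : ℝ) / n) ((k + 1) / n)) : VaRd n ψ s = -ψ ⟨k, hk⟩ := by
  have hn : (0 : ℝ) < n := Nat.cast_pos.2 (Nat.pos_of_ne_zero (NeZero.ne n))
  obtain ⟨hks, hsk⟩ := hs
  rw [div_le_iff₀ hn] at hks
  rw [lt_div_iff₀ hn] at hsk
  have hfloor : ⌊s * n⌋₊ = k := (Nat.floor_eq_iff ((Nat.cast_nonneg k).trans hks)).2 ⟨hks, hsk⟩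
  simp only [VaRd, hfloor, min_eq_left (Nat.le_sub_one_of_lt hk)]

theorem integral_VaRd_of_mem_step {k : ℕ} (hk : k < n) {a b : ℝ} (hka : (k : ℝ) / n ≤ a)
    (hab : a ≤ b) (hbk : b ≤ ((k : ℝ) + 1) / n) :
    ∫ s in a..b, VaRd n ψ s = (b - a) * -ψ ⟨k, hk⟩ :=
  intervalIntegral_eq_of_eqOn_Ico hab fun _ hs =>
    VaRd_eq_of_mem_Ico ψ hk ⟨hka.trans hs.1, hs.2.trans_le hbk⟩

theorem integral_VaRd_zero_nat_div {j : ℕ} (hj : j ≤ n) :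
    ∫ s in (0 : ℝ)..(j / n), VaRd n ψ s = -∑ k ∈ univ.filter (fun k : Fin n => (k : ℕ) < j),
      1 / (n : ℝ) * ψ k := by
  induction j with
  | zero => simp
  | succ j ih =>
    have hjn : j < n := hj
    have hsteps : univ.filter (fun k : Fin n => (k : ℕ) < j + 1) =
        insert ⟨j, hjn⟩ (univ.filter (fun k : Fin n => (k : ℕ) < j)) := by
      ext k
      simp only [mem_insert, mem_filter, mem_univ, true_and, Fin.ext_iff]
      omega
    have hstep := integral_VaRd_of_mem_step ψ hjn le_rfl
      (div_le_div_of_nonneg_right (by linarith) (Nat.cast_nonneg n)) le_rfl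
    rw [Nat.cast_succ, ← intervalIntegral.integral_add_adjacent_intervals
      (intervalIntegrable_VaRd ψ _ _) (intervalIntegrable_VaRd ψ _ _), ih hjn.le, hstep, hsteps,
      sum_insert (by simp)]
    ring

theorem integral_VaRd_zero {j : ℕ} (hj : j < n) {α : ℝ} (hjα : (j : ℝ) / n ≤ α)
    (hαj : α ≤ ((j : ℝ) + 1) / n) :
    ∫ s in (0 : ℝ)..α, VaRd n ψ s = -((∑ k ∈ univ.filter (fun k : Fin n => (k : ℕ) < j),
      1 / (n : ℝ) * ψ k) + (α - j / n) * ψ ⟨j, hj⟩) := by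
  rw [← intervalIntegral.integral_add_adjacent_intervals
    (intervalIntegrable_VaRd ψ _ _) (intervalIntegrable_VaRd ψ _ _),
    integral_VaRd_zero_nat_div ψ hj.le, integral_VaRd_of_mem_step ψ hj le_rfl hjα hαj]
  ring

end VaRd

theorem cvar_equiprobable_formula_general {n : ℕ} [NeZero n]
    (ψ : Fin n → ℝ) (p : ℝ) (hp : p = 1 / n) :
    (∀ j : ℕ, 1 ≤ j → (hj : j ≤ n - 1) → ∀ α : ℝ,
      (j : ℝ) * p ≤ α → α < ((j : ℝ) + 1) * p →
      CVaRd n ψ α =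
        -(1 / α) * ((∑ k ∈ Finset.univ.filter (fun k : Fin n => (k : ℕ) < j),
            p * ψ k)
          + (α - (j : ℝ) * p) *
              ψ ⟨j, lt_of_le_of_lt hj
                    (Nat.sub_lt (Nat.pos_of_ne_zero (NeZero.ne n)) one_pos)⟩)) ∧
    (∀ α : ℝ, 0 < α → α < p → CVaRd n ψ α = -ψ 0) ∧
    CVaRd n ψ 1 = -(∑ k, p * ψ k) := by
  subst hp
  refine ⟨fun j _ hj α hjα hαj => ?_, fun α hα hα1 => ?_, ?_⟩
  · rw [mul_one_div] at hjα hαj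
    rw [CVaRd, integral_VaRd_zero ψ (by omega) hjα hαj.le]
    ring
  · have hzero : (⟨0, NeZero.pos n⟩ : Fin n) = 0 := Fin.ext (Nat.zero_mod n).symm
    rw [CVaRd, integral_VaRd_of_mem_step ψ (NeZero.pos n) (by simp) hα.le (by simpa using hα1.le),
      hzero, sub_zero]
    field_simp
  · have hall : univ.filter (fun k : Fin n => (k : ℕ) < n) = univ :=
      filter_true_of_mem fun k _ => k.isLt
    have hfull := integral_VaRd_zero_nat_div ψ (le_refl n)
    rw [div_self (Nat.cast_ne_zero.2 (NeZero.ne n)), hall] at hfull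
    rw [CVaRd, hfull]
    ring

/-- for an equiprobable discrete distribution with sorted
outcomes `ψ 0 ≤ … ≤ ψ (n-1)` (so `ψ (k-1)` is `ψ^{i_k}`), each of probability
`p = 1/n`: `CVaR_α(ψ) = -(1/α)(Σ_{k=1}^j p ψ^{i_k} + (α - jp) ψ^{i_{j+1}})`
for `α ∈ [jp,(j+1)p)` with `1 ≤ j ≤ n-1`; `CVaR_α(ψ) = -ψ^{i_1}` for
`α ∈ (0,p)`; and `CVaR_1(ψ) = -Σ_k p ψ^{i_k}`. -/
theorem cvar_equiprobable_formula {n : ℕ} [NeZero n]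
    (ψ : Fin n → ℝ) (hψ : Monotone ψ) (p : ℝ) (hp : p = 1 / n) :
    (∀ j : ℕ, 1 ≤ j → (hj : j ≤ n - 1) → ∀ α : ℝ,
      (j : ℝ) * p ≤ α → α < ((j : ℝ) + 1) * p →
      CVaRd n ψ α =
        -(1 / α) * ((∑ k ∈ Finset.univ.filter (fun k : Fin n => (k : ℕ) < j),
            p * ψ k)
          + (α - (j : ℝ) * p) *
              ψ ⟨j, lt_of_le_of_lt hj
                    (Nat.sub_lt (Nat.pos_of_ne_zero (NeZero.ne n)) one_pos)⟩)) ∧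
    (∀ α : ℝ, 0 < α → α < p → CVaRd n ψ α = -ψ 0) ∧
    CVaRd n ψ 1 = -(∑ k, p * ψ k) :=
  cvar_equiprobable_formula_general ψ p hp
end

section
/- Rockafellar–Uryasev representation: for α ∈ (0,1) and a random variable ψ on a finite equiprobable probability space, CVaR_α(ψ) = -max_{c ∈ ℝ} ( c - (1/α) E[(c - ψ)_+] ), where (t)_+ = max{t, 0}, and the maximum is attained for any c in the interval [VaR_{1-α}(-ψ), -VaR_α(ψ)]. -/
/-!
The objective `c ↦ c - α⁻¹ E[(c - ψ)₊]` is concave and piecewise linear, with right slope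
`1 - P(ψ ≤ c) / α` and left slope `1 - P(ψ < c) / α`. Hence it is maximal exactly at the
`α`-quantiles of `ψ`, i.e. the `c` with `P(ψ < c) ≤ α ≤ P(ψ ≤ c)`. Both `-VaR_α(ψ) = ψ_{⌊αn⌋}`
and `VaR_{1-α}(-ψ)` are such quantiles, so the whole interval between them is. Finally,
integrating the step function `s ↦ VaR_s(ψ)` shows that the value of the objective at
`ψ_{⌊αn⌋}` is `-CVaR_α(ψ)`.
-/

open Finset

/-- The value-at-risk of an arbitrary random variable on a finite equiprobable
probability space, obtained by sorting its outcomes. -/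
noncomputable def VaR (n : ℕ) [NeZero n] (ψ : Fin n → ℝ) (α : ℝ) : ℝ :=
  VaRd n (ψ ∘ Tuple.sort ψ) α

section RockafellarUryasev

variable {ι : Type*} [Fintype ι] (p x : ι → ℝ) (α : ℝ)

noncomputable def ruObjective (c : ℝ) : ℝ :=
  c - (1 / α) * ∑ i, p i * max (c - x i) 0

def IsQuantile (c : ℝ) : Prop :=
  ∑ i with x i < c, p i ≤ α ∧ α ≤ ∑ i with x i ≤ c, p i

variable {p x α}

lemma max_sub_sub_max_sub_le {a c d : ℝ} (hdc : d ≤ c) :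
    max (c - a) 0 - max (d - a) 0 ≤ if a < c then c - d else 0 := by
  split_ifs <;> simp only [max_def] <;> split_ifs <;> linarith

lemma le_max_sub_sub_max_sub {a c d : ℝ} (hdc : d ≤ c) :
    (if a ≤ d then c - d else 0) ≤ max (c - a) 0 - max (d - a) 0 := by
  split_ifs <;> simp only [max_def] <;> split_ifs <;> linarith

lemma sum_mul_max_sub_sub_le (hp : 0 ≤ p) {c d : ℝ} (hdc : d ≤ c) :
    ∑ i, p i * max (c - x i) 0 - ∑ i, p i * max (d - x i) 0
      ≤ (c - d) * ∑ i with x i < c, p i := by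
  rw [← sum_sub_distrib, mul_sum, sum_filter]
  refine sum_le_sum fun i _ => ?_
  rw [← mul_sub]
  calc p i * (max (c - x i) 0 - max (d - x i) 0)
      ≤ p i * if x i < c then c - d else 0 :=
        mul_le_mul_of_nonneg_left (max_sub_sub_max_sub_le hdc) (hp i)
    _ = if x i < c then (c - d) * p i else 0 := by split_ifs <;> ring

lemma mul_sum_le_sum_mul_max_sub_sub (hp : 0 ≤ p) {c d : ℝ} (hdc : d ≤ c) :
    (c - d) * ∑ i with x i ≤ d, p i
      ≤ ∑ i, p i * max (c - x i) 0 - ∑ i, p i * max (d - x i) 0 := by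
  rw [← sum_sub_distrib, mul_sum, sum_filter]
  refine sum_le_sum fun i _ => ?_
  calc (if x i ≤ d then (c - d) * p i else 0)
      = p i * if x i ≤ d then c - d else 0 := by split_ifs <;> ring
    _ ≤ p i * (max (c - x i) 0 - max (d - x i) 0) :=
        mul_le_mul_of_nonneg_left (le_max_sub_sub_max_sub hdc) (hp i)
    _ = p i * max (c - x i) 0 - p i * max (d - x i) 0 := mul_sub _ _ _

lemma ruObjective_le_of_isQuantile (hp : 0 ≤ p) (hα : 0 < α) {c₀ : ℝ}
    (hc₀ : IsQuantile p x α c₀) (c : ℝ) : ruObjective p x α c ≤ ruObjective p x α c₀ := by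
  suffices α * (c - c₀) ≤ ∑ i, p i * max (c - x i) 0 - ∑ i, p i * max (c₀ - x i) 0 by
    have h := mul_le_mul_of_nonneg_left this (inv_nonneg.2 hα.le)
    rw [← mul_assoc, inv_mul_cancel₀ hα.ne', one_mul, mul_sub] at h
    simp only [ruObjective, one_div]
    linarith
  rcases le_total c₀ c with h | h
  · calc α * (c - c₀) ≤ (c - c₀) * ∑ i with x i ≤ c₀, p i := by
          rw [mul_comm]; exact mul_le_mul_of_nonneg_left hc₀.2 (sub_nonneg.2 h)
      _ ≤ _ := mul_sum_le_sum_mul_max_sub_sub hp h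
  · have := sum_mul_max_sub_sub_le (x := x) hp h
    have := mul_le_mul_of_nonneg_left hc₀.1 (sub_nonneg.2 h)
    linarith

lemma isGreatest_ruObjective (hp : 0 ≤ p) (hα : 0 < α) {c : ℝ} (hc : IsQuantile p x α c) :
    IsGreatest (Set.range (ruObjective p x α)) (ruObjective p x α c) :=
  ⟨⟨c, rfl⟩, Set.forall_mem_range.2 (ruObjective_le_of_isQuantile hp hα hc)⟩

lemma isQuantile_of_mem_Icc (hp : 0 ≤ p) {a b c : ℝ} (ha : α ≤ ∑ i with x i ≤ a, p i)
    (hb : ∑ i with x i < b, p i ≤ α) (hc : c ∈ Set.Icc a b) : IsQuantile p x α c := by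
  constructor
  · refine le_trans (sum_le_sum_of_subset_of_nonneg ?_ fun i _ _ => hp i) hb
    exact monotone_filter_right _ fun i _ h => h.trans_le hc.2
  · refine ha.trans (sum_le_sum_of_subset_of_nonneg ?_ fun i _ _ => hp i)
    exact monotone_filter_right _ fun i _ h => h.trans hc.1

end RockafellarUryasev

lemma integral_comp_floor_mul_of_mem_Icc (g : ℕ → ℝ) {N : ℝ} (hN : 0 < N) {m : ℕ} {t : ℝ}
    (hmt : m / N ≤ t) (htm : t ≤ (m + 1) / N) :
    ∫ s in (m / N)..t, g ⌊s * N⌋₊ = (t - m / N) * g m := by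
  have hfloor : ∀ᵐ s, s ∈ Set.uIoc (m / N) t → g ⌊s * N⌋₊ = g m := by
    filter_upwards [(Set.countable_singleton ((m + 1) / N)).ae_notMem _] with s hs hst
    rw [Set.uIoc_of_le hmt] at hst
    have hlt : s < (m + 1) / N := lt_of_le_of_ne (hst.2.trans htm) hs
    rw [Nat.floor_eq_on_Ico m (s * N)
      ⟨(div_le_iff₀ hN).1 hst.1.le, (lt_div_iff₀ hN).1 hlt⟩]
  rw [intervalIntegral.integral_congr_ae hfloor, intervalIntegral.integral_const, smul_eq_mul]

lemma integral_comp_floor_mul {g : ℕ → ℝ} (hg : Antitone g) {N : ℝ} (hN : 0 < N) {m : ℕ}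
    {t : ℝ} (hmt : m / N ≤ t) (htm : t ≤ (m + 1) / N) :
    ∫ s in (0 : ℝ)..t, g ⌊s * N⌋₊ = (∑ i ∈ range m, g i) / N + (t - m / N) * g m := by
  have hanti : Antitone fun s : ℝ => g ⌊s * N⌋₊ :=
    fun a b hab => hg (Nat.floor_le_floor (mul_le_mul_of_nonneg_right hab hN.le))
  have hpieces := intervalIntegral.sum_integral_adjacent_intervals (a := fun i : ℕ => i / N)
    (n := m) (μ := MeasureTheory.volume) fun _ _ => hanti.intervalIntegrable
  rw [← intervalIntegral.integral_add_adjacent_intervals (b := m / N)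
    hanti.intervalIntegrable hanti.intervalIntegrable]
  simp only [Nat.cast_zero, zero_div, Nat.cast_add, Nat.cast_one] at hpieces
  rw [← hpieces, integral_comp_floor_mul_of_mem_Icc g hN hmt htm, sum_div]
  congr 1
  refine sum_congr rfl fun i _ => ?_
  rw [integral_comp_floor_mul_of_mem_Icc g hN (by gcongr; linarith) le_rfl]
  field_simp
  ring

section EquiprobableOutcomes

variable {n : ℕ}

lemma card_filter_lt_apply_le {ψ : Fin n → ℝ} (hψ : Monotone ψ) (k : Fin n) :
    #{i | ψ i < ψ k} ≤ k :=
  calc #{i | ψ i < ψ k} ≤ #(Iio k) :=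
        card_le_card fun _ hi => mem_Iio.2 (hψ.reflect_lt (mem_filter.1 hi).2)
    _ = k := Fin.card_Iio k

lemma succ_le_card_filter_le_apply {ψ : Fin n → ℝ} (hψ : Monotone ψ) (k : Fin n) :
    (k : ℕ) + 1 ≤ #{i | ψ i ≤ ψ k} := by
  rw [← Fin.card_Iic]
  exact card_le_card fun i hi => mem_filter.2 ⟨mem_univ i, hψ (mem_Iic.1 hi)⟩

variable [NeZero n]

def extendLast {β : Type*} (ψ : Fin n → β) (t : ℕ) : β :=
  ψ ⟨min t (n - 1), lt_of_le_of_lt (min_le_right _ _)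
    (Nat.sub_lt (Nat.pos_of_ne_zero (NeZero.ne n)) one_pos)⟩

lemma extendLast_val {β : Type*} (ψ : Fin n → β) (i : Fin n) : extendLast ψ i = ψ i :=
  congrArg ψ (Fin.ext (min_eq_left (Nat.le_sub_one_of_lt i.isLt)))

lemma Monotone.extendLast {β : Type*} [Preorder β] {ψ : Fin n → β} (hψ : Monotone ψ) :
    Monotone (extendLast ψ) :=
  fun _ _ h => hψ (Fin.mk_le_mk.2 (min_le_min_right _ h))

lemma VaRd_eq_neg_extendLast (ψ : Fin n → ℝ) (s : ℝ) :
    VaRd n ψ s = -extendLast ψ ⌊s * n⌋₊ := rfl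

lemma exists_VaRd_eq (ψ : Fin n → ℝ) (s : ℝ) :
    ∃ k : Fin n, VaRd n ψ s = -ψ k ∧ (k : ℕ) = min ⌊s * n⌋₊ (n - 1) := ⟨_, rfl, rfl⟩

lemma isQuantile_neg_VaRd {ψ : Fin n → ℝ} (hψ : Monotone ψ) {s : ℝ} (hs₀ : 0 ≤ s)
    (hs₁ : s ≤ 1) : IsQuantile (fun _ => 1 / (n : ℝ)) ψ s (-VaRd n ψ s) := by
  obtain ⟨k, hVaR, hk⟩ := exists_VaRd_eq ψ s
  have hn : (0 : ℝ) < n := Nat.cast_pos.2 (NeZero.pos n)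
  rw [hVaR, neg_neg, IsQuantile, sum_const, sum_const, nsmul_eq_mul, nsmul_eq_mul,
    mul_one_div, mul_one_div, div_le_iff₀ hn, le_div_iff₀ hn]
  constructor
  · calc (#{i | ψ i < ψ k} : ℝ) ≤ k := by exact_mod_cast card_filter_lt_apply_le hψ k
      _ ≤ ⌊s * n⌋₊ := by rw [hk]; exact_mod_cast min_le_left _ _
      _ ≤ s * n := Nat.floor_le (by positivity)
  · refine le_trans ?_ (Nat.cast_le.2 (succ_le_card_filter_le_apply hψ k))
    rcases le_total ⌊s * n⌋₊ (n - 1) with h | h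
    · rw [hk, min_eq_left h, Nat.cast_add_one]
      exact (Nat.lt_floor_add_one _).le
    · have : (k : ℕ) + 1 = n := by omega
      rw [this]
      exact mul_le_of_le_one_left (Nat.cast_nonneg n) hs₁

lemma one_sub_le_sum_filter_le_VaR_neg (ψ : Fin n → ℝ) {s : ℝ} (hs : 0 ≤ s) :
    1 - s ≤ ∑ i with ψ i ≤ VaR n (fun i => -ψ i) s, 1 / (n : ℝ) := by
  set σ := Tuple.sort fun i => -ψ i
  obtain ⟨k, hVaR, hk⟩ := exists_VaRd_eq ((fun i => -ψ i) ∘ σ) s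
  have hn : (0 : ℝ) < n := Nat.cast_pos.2 (NeZero.pos n)
  have hcard : n - (k : ℕ) ≤ #{i | ψ i ≤ VaR n (fun i => -ψ i) s} := by
    rw [VaR, hVaR, ← Fin.card_Ici, ← card_image_of_injective _ σ.injective]
    refine card_le_card fun i hi => ?_
    obtain ⟨i, hki, rfl⟩ := mem_image.1 hi
    have := Tuple.monotone_sort (fun i => -ψ i) (mem_Ici.1 hki)
    simp only [Function.comp_apply, neg_le_neg_iff] at this
    simpa [mem_filter] using this
  have hks : (k : ℝ) ≤ s * n := by
    calc (k : ℝ) ≤ ⌊s * n⌋₊ := by rw [hk]; exact_mod_cast min_le_left _ _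
      _ ≤ s * n := Nat.floor_le (by positivity)
  rw [sum_const, nsmul_eq_mul, mul_one_div, le_div_iff₀ hn]
  calc (1 - s) * n ≤ n - k := by linarith
    _ = ((n - k : ℕ) : ℝ) := (Nat.cast_sub k.isLt.le).symm
    _ ≤ _ := Nat.cast_le.2 hcard

lemma sum_max_extendLast_sub {ψ : Fin n → ℝ} (hψ : Monotone ψ) {j : ℕ} (hj : j ≤ n) :
    ∑ i, max (extendLast ψ j - ψ i) 0 = ∑ t ∈ range j, (extendLast ψ j - extendLast ψ t) := by
  simp_rw [← extendLast_val ψ]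
  rw [Fin.sum_univ_eq_sum_range (fun t => max (extendLast ψ j - extendLast ψ t) 0),
    ← sum_range_add_sum_Ico _ hj]
  have hΨ := hψ.extendLast
  rw [sum_congr rfl fun t ht => max_eq_left (sub_nonneg.2 (hΨ (mem_range.1 ht).le)),
    sum_eq_zero fun t ht => max_eq_right (sub_nonpos.2 (hΨ (mem_Ico.1 ht).1)), add_zero]

lemma CVaRd_eq_neg_ruObjective {ψ : Fin n → ℝ} (hψ : Monotone ψ) {α : ℝ} (hα₀ : 0 < α)
    (hα₁ : α ≤ 1) : CVaRd n ψ α = -ruObjective (fun _ => 1 / (n : ℝ)) ψ α (-VaRd n ψ α) := by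
  set j := ⌊α * n⌋₊
  have hn : (0 : ℝ) < n := Nat.cast_pos.2 (NeZero.pos n)
  have hj : j ≤ n := Nat.floor_le_of_le (mul_le_of_le_one_left (Nat.cast_nonneg n) hα₁)
  have hint : ∫ s in (0 : ℝ)..α, VaRd n ψ s
      = (∑ t ∈ range j, -extendLast ψ t) / n + (α - j / n) * -extendLast ψ j :=
    integral_comp_floor_mul hψ.extendLast.neg hn
      ((div_le_iff₀ hn).2 (Nat.floor_le (by positivity)))
      ((le_div_iff₀ hn).2 (Nat.lt_floor_add_one _).le)
  rw [CVaRd, hint, ruObjective, VaRd_eq_neg_extendLast, neg_neg, ← mul_sum,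
    sum_max_extendLast_sub hψ hj, sum_sub_distrib, sum_neg_distrib, sum_const, card_range,
    nsmul_eq_mul]
  field_simp
  ring

end EquiprobableOutcomes

/-- Rockafellar–Uryasev representation: for `α ∈ (0,1)` and a
random variable `ψ` with sorted equiprobable outcomes (`p = 1/n`),
`CVaR_α(ψ) = -max_{c ∈ ℝ} (c - (1/α) E[(c-ψ)₊])`, and the maximum is attained
for any `c` in the interval `[VaR_{1-α}(-ψ), -VaR_α(ψ)]`. -/
theorem cvar_rockafellarUryasev {n : ℕ} [NeZero n]
    (ψ : Fin n → ℝ) (hψ : Monotone ψ) (p : ℝ) (hp : p = 1 / n)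
    (α : ℝ) (hα0 : 0 < α) (hα1 : α < 1) :
    CVaRd n ψ α
        = -sSup (Set.range fun c : ℝ =>
            c - (1 / α) * ∑ i, p * max (c - ψ i) 0) ∧
    ∀ c ∈ Set.Icc (VaR n (fun i => -ψ i) (1 - α)) (-(VaRd n ψ α)),
      c - (1 / α) * ∑ i, p * max (c - ψ i) 0
        = sSup (Set.range fun c : ℝ =>
            c - (1 / α) * ∑ i, p * max (c - ψ i) 0) := by
  subst hp
  have hp : 0 ≤ fun _ : Fin n => 1 / (n : ℝ) := fun _ => by positivity
  have hVaR := isQuantile_neg_VaRd hψ hα0.le hα1.le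
  have hsSup := (isGreatest_ruObjective hp hα0 hVaR).csSup_eq
  refine ⟨(CVaRd_eq_neg_ruObjective hψ hα0 hα1.le).trans (congrArg Neg.neg hsSup.symm),
    fun c hc => ?_⟩
  have hlow := one_sub_le_sum_filter_le_VaR_neg ψ (sub_nonneg.2 hα1.le)
  rw [sub_sub_cancel] at hlow
  exact (isGreatest_ruObjective hp hα0 (isQuantile_of_mem_Icc hp hlow hVaR.1 hc)).csSup_eq.symm
end
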